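/- arXiv:1606.00478 — 4 statements merged into one kernel-verified Lean document; each statement's English description precedes it below -/
import Mathlib

section
/- Let W and Z be independent nonnegative real-valued random variables on a probability space. Then E[ln(1 + W/(1 + Z))] = ∫₀^∞ (e^{−z}/z) · E[e^{−z·Z}] · (1 − E[e^{−z·W}]) dz, where both sides are interpreted as Lebesgue integrals with values in [0, ∞]. -/
/-!
Writing `log (1 + w / (1 + v)) = log (1 + v + w) - log (1 + v)`, Frullani's integral
`log b - log a = ∫₀^∞ (e^{-az} - e^{-bz}) / z dz` (obtained from `∫₀^∞ e^{-tz} dz = 1/t` by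
Tonelli) turns the left-hand side into `E ∫₀^∞ (e^{-z}/z) e^{-zZ} (1 - e^{-zW}) dz`. Exchanging
the two integrals and factoring the inner expectation by independence gives the right-hand side.
-/

open MeasureTheory ProbabilityTheory Real Set

lemma integral_exp_neg_mul {z : ℝ} (hz : z ≠ 0) (a b : ℝ) :
    ∫ t in a..b, exp (-(z * t)) = (exp (-(z * a)) - exp (-(z * b))) / z := by
  rw [intervalIntegral.integral_comp_mul_left (fun x => exp (-x)) hz,
    intervalIntegral.integral_comp_neg, integral_exp, smul_eq_mul]
  field_simp

lemma ofReal_exp_sub_exp_div_eq_lintegral_Ioc {z a b : ℝ} (hz : 0 < z) (hab : a ≤ b) :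
    ENNReal.ofReal ((exp (-(z * a)) - exp (-(z * b))) / z) =
      ∫⁻ t in Ioc a b, ENNReal.ofReal (exp (-(z * t))) := by
  rw [← ofReal_integral_eq_lintegral_ofReal (by fun_prop : Continuous _).integrableOn_Ioc
    (ae_of_all _ fun t => (exp_pos _).le), ← intervalIntegral.integral_of_le hab,
    integral_exp_neg_mul hz.ne']

lemma lintegral_Ioi_exp_neg_mul {t : ℝ} (ht : 0 < t) :
    ∫⁻ z in Ioi 0, ENNReal.ofReal (exp (-(z * t))) = ENNReal.ofReal t⁻¹ := by
  simp_rw [mul_comm _ t, ← neg_mul]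
  rw [← ofReal_integral_eq_lintegral_ofReal (exp_neg_integrableOn_Ioi 0 ht)
    (ae_of_all _ fun z => (exp_pos _).le)]
  congr 1
  simpa using integral_exp_mul_Ioi (neg_neg_of_pos ht) 0

theorem lintegral_frullani_exp {a b : ℝ} (ha : 0 < a) (hab : a ≤ b) :
    ∫⁻ z in Ioi 0, ENNReal.ofReal ((exp (-(z * a)) - exp (-(z * b))) / z) =
      ENNReal.ofReal (log b - log a) := by
  have hinv : IntegrableOn (fun t : ℝ => t⁻¹) (Ioc a b) :=
    ((continuousOn_inv₀.mono fun t ht => (ha.trans_le ht.1).ne').integrableOn_Icc).mono_set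
      Ioc_subset_Icc_self
  calc ∫⁻ z in Ioi 0, ENNReal.ofReal ((exp (-(z * a)) - exp (-(z * b))) / z)
      = ∫⁻ z in Ioi 0, ∫⁻ t in Ioc a b, ENNReal.ofReal (exp (-(z * t))) :=
        setLIntegral_congr_fun measurableSet_Ioi fun z hz =>
          ofReal_exp_sub_exp_div_eq_lintegral_Ioc hz hab
    _ = ∫⁻ t in Ioc a b, ∫⁻ z in Ioi 0, ENNReal.ofReal (exp (-(z * t))) :=
        lintegral_lintegral_swap (by fun_prop)
    _ = ∫⁻ t in Ioc a b, ENNReal.ofReal t⁻¹ :=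
        setLIntegral_congr_fun measurableSet_Ioc fun t ht =>
          lintegral_Ioi_exp_neg_mul (ha.trans ht.1)
    _ = ENNReal.ofReal (log b - log a) := by
        rw [← ofReal_integral_eq_lintegral_ofReal hinv
          ((ae_restrict_mem measurableSet_Ioc).mono fun t ht => (inv_pos.2 (ha.trans ht.1)).le),
          ← intervalIntegral.integral_of_le hab, integral_inv_of_pos ha (ha.trans_le hab),
          log_div (ha.trans_le hab).ne' ha.ne']

lemma ofReal_log_one_add_div_eq_lintegral {w v : ℝ} (hw : 0 ≤ w) (hv : 0 ≤ v) :
    ENNReal.ofReal (log (1 + w / (1 + v))) =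
      ∫⁻ z in Ioi 0, ENNReal.ofReal (exp (-z) / z * exp (-(z * v)) * (1 - exp (-(z * w)))) := by
  have hlog : log (1 + w / (1 + v)) = log (1 + v + w) - log (1 + v) := by
    rw [← log_div (by positivity) (by positivity)]
    congr 1
    field_simp
  rw [hlog, ← lintegral_frullani_exp (by positivity) (by linarith)]
  refine setLIntegral_congr_fun measurableSet_Ioi fun z _ => ?_
  have h₁ : exp (-(z * (1 + v))) = exp (-z) * exp (-(z * v)) := by
    rw [← exp_add]
    ring_nf
  have h₂ : exp (-(z * (1 + v + w))) = exp (-z) * exp (-(z * v)) * exp (-(z * w)) := by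
    rw [← exp_add, ← exp_add]
    ring_nf
  rw [h₁, h₂]
  congr 1
  ring

section Probability

variable {Ω : Type*} [MeasurableSpace Ω] {μ : Measure Ω}

lemma integrable_exp_neg_mul [IsFiniteMeasure μ] {X : Ω → ℝ} (hX : AEMeasurable X μ)
    (hX0 : 0 ≤ᵐ[μ] X) {z : ℝ} (hz : 0 ≤ z) : Integrable (fun ω => exp (-(z * X ω))) μ :=
  Integrable.of_mem_Icc 0 1 (by fun_prop) <| hX0.mono fun ω h =>
    ⟨(exp_pos _).le, exp_le_one_iff.2 (neg_nonpos.2 (mul_nonneg hz h))⟩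

lemma ProbabilityTheory.IndepFun.lintegral_ofReal_mul {X Y : Ω → ℝ} (hXY : IndepFun X Y μ)
    (hX : Integrable X μ) (hY : Integrable Y μ) (hX0 : 0 ≤ᵐ[μ] X) (hY0 : 0 ≤ᵐ[μ] Y) :
    ∫⁻ ω, ENNReal.ofReal (X ω * Y ω) ∂μ = ENNReal.ofReal ((∫ ω, X ω ∂μ) * ∫ ω, Y ω ∂μ) := by
  calc ∫⁻ ω, ENNReal.ofReal (X ω * Y ω) ∂μ
      = ∫⁻ ω, ENNReal.ofReal (X ω) * ENNReal.ofReal (Y ω) ∂μ :=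
        lintegral_congr_ae (hX0.mono fun ω h => ENNReal.ofReal_mul h)
    _ = (∫⁻ ω, ENNReal.ofReal (X ω) ∂μ) * ∫⁻ ω, ENNReal.ofReal (Y ω) ∂μ :=
        lintegral_mul_eq_lintegral_mul_lintegral_of_indepFun'' hX.1.aemeasurable.ennreal_ofReal
          hY.1.aemeasurable.ennreal_ofReal
          (hXY.comp ENNReal.measurable_ofReal ENNReal.measurable_ofReal)
    _ = ENNReal.ofReal ((∫ ω, X ω ∂μ) * ∫ ω, Y ω ∂μ) := by
        rw [← ofReal_integral_eq_lintegral_ofReal hX hX0,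
          ← ofReal_integral_eq_lintegral_ofReal hY hY0,
          ENNReal.ofReal_mul (integral_nonneg_of_ae hX0)]

lemma ProbabilityTheory.IndepFun.lintegral_ofReal_exp_mul_one_sub_exp [IsProbabilityMeasure μ]
    {X Y : Ω → ℝ} (hXY : IndepFun X Y μ) (hX : AEMeasurable X μ) (hY : AEMeasurable Y μ)
    (hX0 : 0 ≤ᵐ[μ] X) (hY0 : 0 ≤ᵐ[μ] Y) {c z : ℝ} (hc : 0 ≤ c) (hz : 0 ≤ z) :
    ∫⁻ ω, ENNReal.ofReal (c * exp (-(z * X ω)) * (1 - exp (-(z * Y ω)))) ∂μ =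
      ENNReal.ofReal (c * (∫ ω, exp (-(z * X ω)) ∂μ) * (1 - ∫ ω, exp (-(z * Y ω)) ∂μ)) := by
  have hexpY := integrable_exp_neg_mul hY hY0 hz
  have hind : IndepFun (fun ω => c * exp (-(z * X ω))) (fun ω => 1 - exp (-(z * Y ω))) μ :=
    hXY.comp (φ := fun x => c * exp (-(z * x))) (ψ := fun y => 1 - exp (-(z * y)))
      (by fun_prop) (by fun_prop)
  rw [hind.lintegral_ofReal_mul ((integrable_exp_neg_mul hX hX0 hz).const_mul c)
      ((integrable_const 1).sub hexpY) (ae_of_all _ fun ω => by positivity)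
      (hY0.mono fun ω h => sub_nonneg.2 (exp_le_one_iff.2 (neg_nonpos.2 (mul_nonneg hz h)))),
    integral_const_mul, integral_sub (integrable_const 1) hexpY, integral_const, probReal_univ,
    one_smul]

end Probability

/-- For independent nonnegative random variables `W` and `Z` on a probability space,
`E[ln(1 + W/(1 + Z))] = ∫₀^∞ (e^{−z}/z) · E[e^{−z·Z}] · (1 − E[e^{−z·W}]) dz`,
both sides as Lebesgue integrals in `[0, ∞]`. -/
theorem expectation_log_rate_eq_lintegral_mgf
    {Ω : Type*} [MeasurableSpace Ω] (μ : Measure Ω) [IsProbabilityMeasure μ]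
    (W Z : Ω → ℝ) (hW : Measurable W) (hZ : Measurable Z)
    (hW0 : ∀ ω, 0 ≤ W ω) (hZ0 : ∀ ω, 0 ≤ Z ω)
    (hInd : ProbabilityTheory.IndepFun W Z μ) :
    ∫⁻ ω, ENNReal.ofReal (Real.log (1 + W ω / (1 + Z ω))) ∂μ =
      ∫⁻ z in Set.Ioi (0 : ℝ), ENNReal.ofReal (Real.exp (-z) / z *
        (∫ ω, Real.exp (-(z * Z ω)) ∂μ) * (1 - ∫ ω, Real.exp (-(z * W ω)) ∂μ)) := by
  calc ∫⁻ ω, ENNReal.ofReal (log (1 + W ω / (1 + Z ω))) ∂μ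
      = ∫⁻ ω, (∫⁻ z in Ioi 0, ENNReal.ofReal
          (exp (-z) / z * exp (-(z * Z ω)) * (1 - exp (-(z * W ω))))) ∂μ :=
        lintegral_congr fun ω => ofReal_log_one_add_div_eq_lintegral (hW0 ω) (hZ0 ω)
    _ = ∫⁻ z in Ioi 0, ∫⁻ ω, ENNReal.ofReal
          (exp (-z) / z * exp (-(z * Z ω)) * (1 - exp (-(z * W ω)))) ∂μ :=
        lintegral_lintegral_swap (by fun_prop)
    _ = _ := setLIntegral_congr_fun measurableSet_Ioi fun z (hz : 0 < z) =>
        hInd.symm.lintegral_ofReal_exp_mul_one_sub_exp hZ.aemeasurable hW.aemeasurable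
          (ae_of_all _ hZ0) (ae_of_all _ hW0) (by positivity) hz.le
end

section
/- Let M ≥ 1, let g, u ∈ ℂ^M (with the standard Hermitian inner product ⟨·,·⟩, conjugate-linear in the first argument, and norm ‖·‖), and let a ≥ 0 be a real number. Then the supremum over all unit vectors w ∈ ℂ^M of the quotient |⟨w, g⟩|² / (a·|⟨w, u⟩|² + 1) equals ‖g‖² − a·|⟨u, g⟩|² / (1 + a·‖u‖²). -/
/-!
Let `A = 1 + a u u†`. For a unit vector `w` the denominator is `⟪w, A w⟫`, and the Sherman–Morrison
formula gives `v = A⁻¹ g` explicitly, so that `⟪w, g⟫ = ⟪w, A v⟫`. Cauchy–Schwarz for the inner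
product `⟪·, A ·⟫` bounds the quotient by `⟪v, A v⟫ = ⟪v, g⟫ = ‖g‖² - a |⟪u, g⟫|² / (1 + a ‖u‖²)`,
with equality at `w = v / ‖v‖`.
-/

open scoped InnerProductSpace

variable {𝕜 E : Type*} [RCLike 𝕜] [NormedAddCommGroup E] [InnerProductSpace 𝕜 E]

theorem norm_inner_sq_div_norm_sq_le (x y : E) : ‖⟪y, x⟫_𝕜‖ ^ 2 / ‖y‖ ^ 2 ≤ ‖x‖ ^ 2 := by
  refine div_le_of_le_mul₀ (by positivity) (by positivity) ?_
  rw [← mul_pow, mul_comm ‖x‖]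
  gcongr
  exact norm_inner_le_norm y x

theorem norm_inner_smul_sq_div_norm_sq {t : 𝕜} (ht : t ≠ 0) (x : E) :
    ‖⟪t • x, x⟫_𝕜‖ ^ 2 / ‖t • x‖ ^ 2 = ‖x‖ ^ 2 := by
  rcases eq_or_ne x 0 with rfl | hx
  · simp
  rw [inner_smul_left, inner_self_eq_norm_sq_to_K, norm_mul, RCLike.norm_conj, norm_smul]
  have : ‖t‖ ≠ 0 := norm_ne_zero_iff.mpr ht
  have : ‖x‖ ≠ 0 := norm_ne_zero_iff.mpr hx
  simp only [norm_pow, RCLike.norm_ofReal, abs_norm]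
  field_simp

variable (𝕜) in
/-- For `0 ≤ a`, an isometry from `E` with the inner product `⟪·, (1 + a u u†) ·⟫` into
`WithLp 2 (E × 𝕜)`, through which that inner product inherits Cauchy–Schwarz. -/
noncomputable def liftRankOne (a : ℝ) (u : E) : E →ₗ[𝕜] WithLp 2 (E × 𝕜) :=
  (WithLp.linearEquiv 2 𝕜 (E × 𝕜)).symm.toLinearMap ∘ₗ
    LinearMap.id.prod (((√a : ℝ) : 𝕜) • innerₛₗ 𝕜 u)

theorem liftRankOne_apply (a : ℝ) (u w : E) :
    liftRankOne 𝕜 a u w = WithLp.toLp 2 (w, ((√a : ℝ) : 𝕜) * ⟪u, w⟫_𝕜) := rfl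

theorem inner_liftRankOne {a : ℝ} (ha : 0 ≤ a) (u w x : E) :
    ⟪liftRankOne 𝕜 a u w, liftRankOne 𝕜 a u x⟫_𝕜 = ⟪w, x⟫_𝕜 + a * ⟪w, u⟫_𝕜 * ⟪u, x⟫_𝕜 := by
  simp only [liftRankOne_apply, WithLp.prod_inner_apply, RCLike.inner_apply, map_mul,
    RCLike.conj_ofReal, inner_conj_symm]
  have hsqrt : ((√a : ℝ) : 𝕜) * (√a : ℝ) = a := by rw [← RCLike.ofReal_mul, Real.mul_self_sqrt ha]
  linear_combination ⟪w, u⟫_𝕜 * ⟪u, x⟫_𝕜 * hsqrt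

theorem norm_liftRankOne_sq {a : ℝ} (ha : 0 ≤ a) (u w : E) :
    ‖liftRankOne 𝕜 a u w‖ ^ 2 = a * ‖⟪w, u⟫_𝕜‖ ^ 2 + ‖w‖ ^ 2 := by
  rw [WithLp.prod_norm_sq_eq_of_L2]
  simp [liftRankOne_apply, mul_pow, norm_inner_symm, ha]
  ring

variable (𝕜) in
/-- `(1 + a u u†)⁻¹ g`, by the Sherman–Morrison formula. -/
noncomputable def shermanMorrisonSolve (a : ℝ) (u g : E) : E :=
  g - (((a / (1 + a * ‖u‖ ^ 2) : ℝ) : 𝕜) * ⟪u, g⟫_𝕜) • u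

theorem shermanMorrisonSolve_add_smul {a : ℝ} {u : E} (h : 1 + a * ‖u‖ ^ 2 ≠ 0) (g : E) :
    shermanMorrisonSolve 𝕜 a u g + ((a : 𝕜) * ⟪u, shermanMorrisonSolve 𝕜 a u g⟫_𝕜) • u = g := by
  have hC : ((1 + a * ‖u‖ ^ 2 : ℝ) : 𝕜) ≠ 0 := RCLike.ofReal_ne_zero.mpr h
  have huu : ⟪u, u⟫_𝕜 = ((‖u‖ ^ 2 : ℝ) : 𝕜) := by simp [inner_self_eq_norm_sq_to_K]
  rw [shermanMorrisonSolve, inner_sub_right, inner_smul_right, huu, sub_add_eq_add_sub,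
    add_sub_assoc, ← sub_smul, add_eq_left, smul_eq_zero]
  left
  push_cast at hC ⊢
  field_simp
  ring

theorem inner_shermanMorrisonSolve (a : ℝ) (u g : E) :
    ⟪shermanMorrisonSolve 𝕜 a u g, g⟫_𝕜 =
      ((‖g‖ ^ 2 - a * ‖⟪u, g⟫_𝕜‖ ^ 2 / (1 + a * ‖u‖ ^ 2) : ℝ) : 𝕜) := by
  rw [shermanMorrisonSolve, inner_sub_left, inner_smul_left, inner_self_eq_norm_sq_to_K, map_mul,
    RCLike.conj_ofReal, mul_assoc, RCLike.conj_mul]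
  push_cast
  ring

section

variable {a : ℝ} {u g v : E}

theorem inner_eq_inner_liftRankOne (ha : 0 ≤ a) (hv : v + ((a : 𝕜) * ⟪u, v⟫_𝕜) • u = g) (w : E) :
    ⟪w, g⟫_𝕜 = ⟪liftRankOne 𝕜 a u w, liftRankOne 𝕜 a u v⟫_𝕜 := by
  rw [inner_liftRankOne ha, ← hv, inner_add_right, inner_smul_right]
  ring

theorem isGreatest_ratio_liftRankOne [Nontrivial E] (ha : 0 ≤ a)
    (hv : v + ((a : 𝕜) * ⟪u, v⟫_𝕜) • u = g) :
    IsGreatest {r : ℝ | ∃ w : E, ‖w‖ = 1 ∧ r = ‖⟪w, g⟫_𝕜‖ ^ 2 / (a * ‖⟪w, u⟫_𝕜‖ ^ 2 + 1)}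
      (‖liftRankOne 𝕜 a u v‖ ^ 2) := by
  have hratio : ∀ w : E, ‖w‖ = 1 → ‖⟪w, g⟫_𝕜‖ ^ 2 / (a * ‖⟪w, u⟫_𝕜‖ ^ 2 + 1) =
      ‖⟪liftRankOne 𝕜 a u w, liftRankOne 𝕜 a u v⟫_𝕜‖ ^ 2 / ‖liftRankOne 𝕜 a u w‖ ^ 2 := by
    intro w hw
    rw [inner_eq_inner_liftRankOne ha hv, norm_liftRankOne_sq ha, hw, one_pow]
  refine ⟨?_, ?_⟩
  · rcases eq_or_ne v 0 with rfl | hv0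
    · obtain ⟨x, hx⟩ := exists_ne (0 : E)
      exact ⟨_, norm_smul_inv_norm (𝕜 := 𝕜) hx, by simp [hratio _ (norm_smul_inv_norm hx)]⟩
    · refine ⟨_, norm_smul_inv_norm (𝕜 := 𝕜) hv0, ?_⟩
      rw [hratio _ (norm_smul_inv_norm hv0), map_smul, norm_inner_smul_sq_div_norm_sq]
      simpa using hv0
  · rintro r ⟨w, hw, rfl⟩
    rw [hratio w hw]
    exact norm_inner_sq_div_norm_sq_le _ _

end

/-- The supremum over unit vectors `w ∈ ℂ^M` of `|⟨w, g⟩|² / (a·|⟨w, u⟩|² + 1)` equals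
`‖g‖² − a·|⟨u, g⟩|² / (1 + a·‖u‖²)`. -/
theorem sSup_beamformer_ratio
    (M : ℕ) (hM : 1 ≤ M) (g u : EuclideanSpace ℂ (Fin M)) (a : ℝ) (ha : 0 ≤ a) :
    sSup {r : ℝ | ∃ w : EuclideanSpace ℂ (Fin M), ‖w‖ = 1 ∧
        r = ‖⟪w, g⟫_ℂ‖ ^ 2 / (a * ‖⟪w, u⟫_ℂ‖ ^ 2 + 1)} =
      ‖g‖ ^ 2 - a * ‖⟪u, g⟫_ℂ‖ ^ 2 / (1 + a * ‖u‖ ^ 2) := by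
  have : Nonempty (Fin M) := ⟨⟨0, hM⟩⟩
  set v := shermanMorrisonSolve ℂ a u g
  have hv : v + ((a : ℂ) * ⟪u, v⟫_ℂ) • u = g := shermanMorrisonSolve_add_smul (by positivity) g
  rw [(isGreatest_ratio_liftRankOne ha hv).csSup_eq]
  have hval := (inner_eq_inner_liftRankOne ha hv v).symm.trans (inner_shermanMorrisonSolve a u g)
  rw [inner_self_eq_norm_sq_to_K] at hval
  exact_mod_cast hval
end

section
/- Let M ≥ 1, let g, u ∈ ℂ^M with g ≠ 0, and let a ≥ 0 be a real number. Let A be the M×M complex matrix A = I + a·u u†, where u u† denotes the rank-one outer product matrix sending x to ⟨u, x⟩·u (inner product conjugate-linear in the first argument). Then A is invertible, the vector w* = A⁻¹ g / ‖A⁻¹ g‖ is a well-defined unit vector, and w* attains the supremum of |⟨w, g⟩|² / (a·|⟨w, u⟩|² + 1) over all unit vectors w ∈ ℂ^M; that is, |⟨w*, g⟩|² / (a·|⟨w*, u⟩|² + 1) ≥ |⟨w, g⟩|² / (a·|⟨w, u⟩|² + 1) for every unit vector w. -/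
/-!
Since `A = 1 + a • u u†` is a positive operator, `(x, y) ↦ ⟪x, A y⟫` is a positive semidefinite
Hermitian form, and for a unit vector `w` the denominator `a‖⟪w, u⟫‖² + 1` equals `⟪w, A w⟫`.
Writing `g = A v`, the objective becomes the generalized Rayleigh quotient
`‖⟪w, A v⟫‖² / ⟪w, A w⟫`, which by Cauchy–Schwarz for this form is at most `⟪v, A v⟫`,
with equality at every nonzero multiple of `v`.
-/

open scoped InnerProductSpace
open RCLike

namespace ContinuousLinearMap

variable {E : Type*} [NormedAddCommGroup E] [InnerProductSpace ℂ E] {T : E →L[ℂ] E}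

theorem IsPositive.inner_apply_self_eq_re (hT : T.IsPositive) (x : E) :
    ⟪x, T x⟫_ℂ = re ⟪x, T x⟫_ℂ :=
  Complex.eq_re_of_ofReal_le (hT.inner_nonneg_right x)

theorem IsPositive.norm_inner_smul_apply_sq_div (hT : T.IsPositive) (v : E) {c : ℂ}
    (hc : c ≠ 0) :
    ‖⟪c • v, T v⟫_ℂ‖ ^ 2 / re ⟪c • v, T (c • v)⟫_ℂ = re ⟪v, T v⟫_ℂ := by
  have hr := hT.re_inner_nonneg_right v
  have hv := hT.inner_apply_self_eq_re v
  generalize re ⟪v, T v⟫_ℂ = r at hr hv ⊢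
  have hc' : ‖c‖ ^ 2 ≠ 0 := by positivity
  simp only [map_smul, inner_smul_left, inner_smul_right, hv]
  rw [mul_left_comm, ← mul_assoc, Complex.conj_mul',
    norm_mul, RCLike.norm_conj, Complex.norm_of_nonneg hr, RCLike.re_to_complex]
  norm_cast
  rw [mul_pow, sq r, mul_div_mul_left _ _ hc', mul_self_div_self]

variable [CompleteSpace E]

theorem IsPositive.norm_inner_apply_sq_le (hT : T.IsPositive) (x y : E) :
    ‖⟪x, T y⟫_ℂ‖ ^ 2 ≤ re ⟪x, T x⟫_ℂ * re ⟪y, T y⟫_ℂ := by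
  obtain ⟨S, rfl⟩ :=
    CStarAlgebra.nonneg_iff_eq_star_mul_self.mp ((nonneg_iff_isPositive T).mpr hT)
  have hS : ∀ x y : E, ⟪x, (star S * S) y⟫_ℂ = ⟪S x, S y⟫_ℂ := fun x y => by
    simp [star_eq_adjoint, adjoint_inner_right]
  simp only [hS, inner_self_eq_norm_sq, ← mul_pow]
  exact pow_le_pow_left₀ (norm_nonneg _) (norm_inner_le_norm _ _) 2

theorem IsPositive.norm_inner_apply_sq_div_le (hT : T.IsPositive) (v w : E) :
    ‖⟪w, T v⟫_ℂ‖ ^ 2 / re ⟪w, T w⟫_ℂ ≤ re ⟪v, T v⟫_ℂ := by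
  rcases (hT.re_inner_nonneg_right w).eq_or_lt with hw | hw
  · rw [← hw, div_zero]
    exact hT.re_inner_nonneg_right v
  · rw [div_le_iff₀' hw]
    exact hT.norm_inner_apply_sq_le w v

end ContinuousLinearMap

open ContinuousLinearMap InnerProductSpace

section RankOnePerturbation

variable {E : Type*} [NormedAddCommGroup E] [InnerProductSpace ℂ E]

theorem re_inner_one_add_smul_rankOne_self_apply (a : ℝ) (u x : E) :
    re ⟪x, (1 + (a : ℂ) • rankOne ℂ u u) x⟫_ℂ = ‖x‖ ^ 2 + a * ‖⟪x, u⟫_ℂ‖ ^ 2 := by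
  rw [add_apply, one_apply_eq_self, smul_apply, rankOne_apply, inner_add_right, inner_smul_right,
    inner_smul_right, ← inner_conj_symm x u, Complex.mul_conj', RCLike.norm_conj,
    map_add, inner_self_eq_norm_sq]
  norm_cast

theorem isStrictlyPositive_one_add_smul_rankOne_self [CompleteSpace E] {a : ℝ} (ha : 0 ≤ a)
    (u : E) :
    IsStrictlyPositive (1 + (a : ℂ) • rankOne ℂ u u) :=
  isStrictlyPositive_one.add_nonneg <| (nonneg_iff_isPositive _).mpr <|
    (isPositive_rankOne_self u).smul_of_nonneg (Complex.zero_le_real.mpr ha)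

end RankOnePerturbation

theorem optimal_receive_beamformer_general
    (M : ℕ) (g u : EuclideanSpace ℂ (Fin M)) (hg : g ≠ 0)
    (a : ℝ) (ha : 0 ≤ a)
    (A : EuclideanSpace ℂ (Fin M) →L[ℂ] EuclideanSpace ℂ (Fin M))
    (hA : ∀ x, A x = x + (a : ℂ) • (⟪u, x⟫_ℂ • u)) :
    IsUnit A ∧ Ring.inverse A g ≠ 0 ∧
      ‖(‖Ring.inverse A g‖)⁻¹ • Ring.inverse A g‖ = 1 ∧
      ∀ w : EuclideanSpace ℂ (Fin M), ‖w‖ = 1 →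
        ‖⟪w, g⟫_ℂ‖ ^ 2 / (a * ‖⟪w, u⟫_ℂ‖ ^ 2 + 1) ≤
          ‖⟪(‖Ring.inverse A g‖)⁻¹ • Ring.inverse A g, g⟫_ℂ‖ ^ 2 /
            (a * ‖⟪(‖Ring.inverse A g‖)⁻¹ • Ring.inverse A g, u⟫_ℂ‖ ^ 2 + 1) := by
  have hA_eq : A = 1 + (a : ℂ) • rankOne ℂ u u := ext fun x => by simp [hA]
  have hA_pos : IsStrictlyPositive A := hA_eq ▸ isStrictlyPositive_one_add_smul_rankOne_self ha u
  have hT : A.IsPositive := (nonneg_iff_isPositive A).mp hA_pos.nonneg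
  set v := Ring.inverse A g
  have hAv : A v = g := congr($(Ring.mul_inverse_cancel A hA_pos.isUnit) g)
  have hv : v ≠ 0 := fun h => hg (by rw [← hAv, h, map_zero])
  have hv_unit : ‖(‖v‖)⁻¹ • v‖ = 1 := norm_smul_inv_norm hv
  have hden : ∀ w, ‖w‖ = 1 → a * ‖⟪w, u⟫_ℂ‖ ^ 2 + 1 = re ⟪w, A w⟫_ℂ := fun w hw => by
    rw [hA_eq, re_inner_one_add_smul_rankOne_self_apply, hw]; ring
  refine ⟨hA_pos.isUnit, hv, hv_unit, fun w hw => ?_⟩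
  rw [hden w hw, hden _ hv_unit, ← hAv, ← Complex.coe_smul]
  exact (hT.norm_inner_apply_sq_div_le v w).trans_eq
    (hT.norm_inner_smul_apply_sq_div v (by simpa using hv)).symm

/-- For `g ≠ 0`, `u ∈ ℂ^M` and `a ≥ 0`, the operator `A = I + a·u u†` is invertible,
`w* = A⁻¹ g / ‖A⁻¹ g‖` is a well-defined unit vector, and `w*` attains the supremum of
`|⟨w, g⟩|² / (a·|⟨w, u⟩|² + 1)` over all unit vectors `w`. -/
theorem optimal_receive_beamformer
    (M : ℕ) (hM : 1 ≤ M) (g u : EuclideanSpace ℂ (Fin M)) (hg : g ≠ 0)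
    (a : ℝ) (ha : 0 ≤ a)
    (A : EuclideanSpace ℂ (Fin M) →L[ℂ] EuclideanSpace ℂ (Fin M))
    (hA : ∀ x, A x = x + (a : ℂ) • (⟪u, x⟫_ℂ • u)) :
    IsUnit A ∧ Ring.inverse A g ≠ 0 ∧
      ‖(‖Ring.inverse A g‖)⁻¹ • Ring.inverse A g‖ = 1 ∧
      ∀ w : EuclideanSpace ℂ (Fin M), ‖w‖ = 1 →
        ‖⟪w, g⟫_ℂ‖ ^ 2 / (a * ‖⟪w, u⟫_ℂ‖ ^ 2 + 1) ≤
          ‖⟪(‖Ring.inverse A g‖)⁻¹ • Ring.inverse A g, g⟫_ℂ‖ ^ 2 /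
            (a * ‖⟪(‖Ring.inverse A g‖)⁻¹ • Ring.inverse A g, u⟫_ℂ‖ ^ 2 + 1) :=
  optimal_receive_beamformer_general M g u hg a ha A hA
end

section
/- Let M ≥ 1, let h, g ∈ ℂ^M, let H be an M×M complex matrix, let a₁, a₂, a₃ ≥ 0 be real numbers, and let w_t ∈ ℂ^M be a unit vector. Then the supremum over all unit vectors w_r ∈ ℂ^M of ln(1 + a₁·|⟨w_t, h⟩|²) + ln(1 + a₂·|⟨w_r, g⟩|² / (a₃·|⟨w_r, H w_t⟩|² + 1)) equals ln(1 + a₁·|⟨w_t, h⟩|²) + ln(1 + a₂·(‖g‖² − a₃·|⟨H w_t, g⟩|² / (1 + a₃·‖H w_t‖²))). -/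
/-!
For fixed `w_t` the first logarithm is a constant and the second increases with the generalized
Rayleigh quotient `|⟪x, g⟫|² / xᴴ (I + a₃ v vᴴ) x` over unit `x`, where `v = H w_t`. The embedding
`x ↦ (x, √a₃ ⟪v, x⟫)` of `ℂ^M` into `ℂ^M × ℂ` turns the form of `I + a₃ v vᴴ` into a plain inner
product, and the Sherman–Morrison vector `u = (I + a₃ v vᴴ)⁻¹ g` represents `⟪·, g⟫` in it.
Cauchy–Schwarz then bounds the quotient by `⟪u, g⟫ = ‖g‖² - a₃ |⟪v, g⟫|² / (1 + a₃ ‖v‖²)`,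
with equality at `x = u / ‖u‖`.
-/

open scoped InnerProductSpace

section RankOnePerturbation

variable {E : Type*} [NormedAddCommGroup E] [InnerProductSpace ℂ E] {a : ℝ} (v g : E)

/-- `inner_self_eq_norm_sq_to_K` with the cast `Complex.ofReal` in place of `RCLike.ofReal`,
which `push_cast` and `norm_cast` do not recognise. -/
theorem inner_self_eq_ofReal_norm_sq (x : E) : ⟪x, x⟫_ℂ = (‖x‖ : ℂ) ^ 2 :=
  inner_self_eq_norm_sq_to_K x

noncomputable def rankOneEmbedding (a : ℝ) (v : E) : E →ₗ[ℂ] WithLp 2 (E × ℂ) :=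
  (WithLp.linearEquiv 2 ℂ (E × ℂ)).symm.toLinearMap ∘ₗ
    LinearMap.id.prod ((Real.sqrt a : ℂ) • innerₛₗ ℂ v)

theorem rankOneEmbedding_apply (a : ℝ) (v x : E) :
    rankOneEmbedding a v x = WithLp.toLp 2 (x, (Real.sqrt a : ℂ) * ⟪v, x⟫_ℂ) :=
  rfl

/-- `(I + a v vᴴ)⁻¹ g`, by the Sherman–Morrison formula. -/
noncomputable def shermanMorrison (a : ℝ) (v g : E) : E :=
  g - (a * ⟪v, g⟫_ℂ / (1 + a * ‖v‖ ^ 2 : ℝ)) • v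

/-- `gᴴ (I + a v vᴴ)⁻¹ g`. -/
noncomputable def shermanMorrisonQuad (a : ℝ) (v g : E) : ℝ :=
  ‖g‖ ^ 2 - a * ‖⟪v, g⟫_ℂ‖ ^ 2 / (1 + a * ‖v‖ ^ 2)

theorem inner_rankOneEmbedding (ha : 0 ≤ a) (x y : E) :
    ⟪rankOneEmbedding a v x, rankOneEmbedding a v y⟫_ℂ =
      ⟪x, y⟫_ℂ + a * (⟪x, v⟫_ℂ * ⟪v, y⟫_ℂ) := by
  have hsqrt : (Real.sqrt a : ℂ) * Real.sqrt a = a := by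
    rw [← Complex.ofReal_mul, Real.mul_self_sqrt ha]
  rw [rankOneEmbedding_apply, rankOneEmbedding_apply, WithLp.prod_inner_apply]
  simp only [RCLike.inner_apply, map_mul, Complex.conj_ofReal, inner_conj_symm]
  linear_combination (⟪x, v⟫_ℂ * ⟪v, y⟫_ℂ) * hsqrt

theorem norm_rankOneEmbedding_sq (ha : 0 ≤ a) (x : E) :
    ‖rankOneEmbedding a v x‖ ^ 2 = ‖x‖ ^ 2 + a * ‖⟪x, v⟫_ℂ‖ ^ 2 := by
  have h := inner_rankOneEmbedding v ha x x
  rw [inner_self_eq_ofReal_norm_sq, inner_self_eq_ofReal_norm_sq, ← inner_conj_symm v x,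
    Complex.mul_conj'] at h
  exact_mod_cast h

theorem inner_rankOneEmbedding_shermanMorrison (ha : 0 ≤ a) (x : E) :
    ⟪rankOneEmbedding a v x, rankOneEmbedding a v (shermanMorrison a v g)⟫_ℂ = ⟪x, g⟫_ℂ := by
  have hD : ((1 + a * ‖v‖ ^ 2 : ℝ) : ℂ) ≠ 0 := by norm_cast; positivity
  rw [inner_rankOneEmbedding v ha, shermanMorrison, inner_sub_right, inner_sub_right,
    inner_smul_right, inner_smul_right, inner_self_eq_ofReal_norm_sq]
  field_simp
  push_cast
  ring

theorem inner_shermanMorrison_left :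
    ⟪shermanMorrison a v g, g⟫_ℂ = shermanMorrisonQuad a v g := by
  rw [shermanMorrison, shermanMorrisonQuad, inner_sub_left, inner_smul_left,
    inner_self_eq_ofReal_norm_sq, map_div₀, map_mul, Complex.conj_ofReal, Complex.conj_ofReal]
  push_cast
  linear_combination (-(a : ℂ) / (1 + a * ‖v‖ ^ 2)) * Complex.conj_mul' ⟪v, g⟫_ℂ

theorem norm_rankOneEmbedding_shermanMorrison_sq (ha : 0 ≤ a) :
    ‖rankOneEmbedding a v (shermanMorrison a v g)‖ ^ 2 = shermanMorrisonQuad a v g := by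
  have h := inner_self_eq_ofReal_norm_sq (rankOneEmbedding a v (shermanMorrison a v g))
  rw [inner_rankOneEmbedding_shermanMorrison v g ha, inner_shermanMorrison_left] at h
  exact_mod_cast h.symm

theorem norm_inner_sq_le_shermanMorrisonQuad_mul (ha : 0 ≤ a) (x : E) :
    ‖⟪x, g⟫_ℂ‖ ^ 2 ≤ shermanMorrisonQuad a v g * ‖rankOneEmbedding a v x‖ ^ 2 := by
  rw [← inner_rankOneEmbedding_shermanMorrison v g ha,
    ← norm_rankOneEmbedding_shermanMorrison_sq v g ha, mul_comm, ← mul_pow]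
  exact pow_le_pow_left₀ (norm_nonneg _) (norm_inner_le_norm _ _) 2

theorem exists_norm_eq_one_norm_inner_sq_eq [Nontrivial E] (ha : 0 ≤ a) :
    ∃ x : E, ‖x‖ = 1 ∧
      ‖⟪x, g⟫_ℂ‖ ^ 2 = shermanMorrisonQuad a v g * ‖rankOneEmbedding a v x‖ ^ 2 := by
  by_cases hu : shermanMorrison a v g = 0
  · obtain ⟨x, hx⟩ := exists_norm_eq E zero_le_one
    have hS : shermanMorrisonQuad a v g = 0 := by
      rw [← norm_rankOneEmbedding_shermanMorrison_sq v g ha, hu, map_zero, norm_zero, sq, zero_mul]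
    refine ⟨x, hx, le_antisymm ?_ (by rw [hS, zero_mul]; positivity)⟩
    simpa [hS] using norm_inner_sq_le_shermanMorrisonQuad_mul v g ha x
  · refine ⟨(‖shermanMorrison a v g‖⁻¹ : ℂ) • shermanMorrison a v g, norm_smul_inv_norm hu, ?_⟩
    rw [map_smul, norm_smul, inner_smul_left, norm_mul, RCLike.norm_conj, mul_pow, mul_pow,
      inner_shermanMorrison_left, norm_rankOneEmbedding_shermanMorrison_sq v g ha,
      Complex.norm_real, Real.norm_eq_abs, sq_abs]
    ring

theorem isGreatest_rayleighQuotient [Nontrivial E] (ha : 0 ≤ a) :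
    IsGreatest ((fun x : E => ‖⟪x, g⟫_ℂ‖ ^ 2 / (a * ‖⟪x, v⟫_ℂ‖ ^ 2 + 1)) '' Metric.sphere 0 1)
      (shermanMorrisonQuad a v g) := by
  have hden : ∀ x : E, ‖x‖ = 1 → a * ‖⟪x, v⟫_ℂ‖ ^ 2 + 1 = ‖rankOneEmbedding a v x‖ ^ 2 := by
    intro x hx
    rw [norm_rankOneEmbedding_sq v ha, hx]
    ring
  constructor
  · obtain ⟨x, hx, hmax⟩ := exists_norm_eq_one_norm_inner_sq_eq v g ha
    have hpos : 0 < a * ‖⟪x, v⟫_ℂ‖ ^ 2 + 1 := by positivity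
    refine ⟨x, mem_sphere_zero_iff_norm.mpr hx, ?_⟩
    dsimp only
    rw [hmax, ← hden x hx, mul_div_cancel_right₀ _ hpos.ne']
  · rintro _ ⟨x, hx, rfl⟩
    rw [mem_sphere_zero_iff_norm] at hx
    rw [div_le_iff₀ (by positivity), hden x hx]
    exact norm_inner_sq_le_shermanMorrisonQuad_mul v g ha x

end RankOnePerturbation

theorem sum_rate_receive_beamformer_reduction_general
    (M : ℕ) (hM : 1 ≤ M) (h g : EuclideanSpace ℂ (Fin M))
    (H : Matrix (Fin M) (Fin M) ℂ)
    (a₁ a₂ a₃ : ℝ) (ha₂ : 0 ≤ a₂) (ha₃ : 0 ≤ a₃)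
    (wt : EuclideanSpace ℂ (Fin M)) :
    sSup {r : ℝ | ∃ wr : EuclideanSpace ℂ (Fin M), ‖wr‖ = 1 ∧
        r = Real.log (1 + a₁ * ‖⟪wt, h⟫_ℂ‖ ^ 2) +
          Real.log (1 + a₂ * ‖⟪wr, g⟫_ℂ‖ ^ 2 /
            (a₃ * ‖⟪wr, Matrix.toEuclideanLin H wt⟫_ℂ‖ ^ 2 + 1))} =
      Real.log (1 + a₁ * ‖⟪wt, h⟫_ℂ‖ ^ 2) +
        Real.log (1 + a₂ * (‖g‖ ^ 2 -
          a₃ * ‖⟪Matrix.toEuclideanLin H wt, g⟫_ℂ‖ ^ 2 /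
            (1 + a₃ * ‖Matrix.toEuclideanLin H wt‖ ^ 2))) := by
  have : Nonempty (Fin M) := ⟨⟨0, hM⟩⟩
  set v := Matrix.toEuclideanLin H wt
  have hquot := isGreatest_rayleighQuotient v g ha₃
  have hrate : MonotoneOn (fun r => Real.log (1 + a₁ * ‖⟪wt, h⟫_ℂ‖ ^ 2) + Real.log (1 + a₂ * r))
      ((fun x => ‖⟪x, g⟫_ℂ‖ ^ 2 / (a₃ * ‖⟪x, v⟫_ℂ‖ ^ 2 + 1)) '' Metric.sphere 0 1) := by
    rintro _ ⟨x, -, rfl⟩ _ ⟨y, -, rfl⟩ hxy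
    dsimp only
    gcongr
  refine Eq.trans ?_ (hrate.map_isGreatest hquot).csSup_eq
  congr 1
  ext r
  simp [mul_div_assoc, eq_comm]

/-- Reduction of the joint beamformer sum-rate maximization: for a fixed unit-norm transmit
beamformer `w_t`, the supremum over unit-norm receive beamformers `w_r` of
`ln(1 + a₁|⟨w_t,h⟩|²) + ln(1 + a₂|⟨w_r,g⟩|²/(a₃|⟨w_r,H w_t⟩|² + 1))` equals
`ln(1 + a₁|⟨w_t,h⟩|²) + ln(1 + a₂(‖g‖² − a₃|⟨H w_t,g⟩|²/(1 + a₃‖H w_t‖²)))`. -/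
theorem sum_rate_receive_beamformer_reduction
    (M : ℕ) (hM : 1 ≤ M) (h g : EuclideanSpace ℂ (Fin M))
    (H : Matrix (Fin M) (Fin M) ℂ)
    (a₁ a₂ a₃ : ℝ) (ha₁ : 0 ≤ a₁) (ha₂ : 0 ≤ a₂) (ha₃ : 0 ≤ a₃)
    (wt : EuclideanSpace ℂ (Fin M)) (hwt : ‖wt‖ = 1) :
    sSup {r : ℝ | ∃ wr : EuclideanSpace ℂ (Fin M), ‖wr‖ = 1 ∧
        r = Real.log (1 + a₁ * ‖⟪wt, h⟫_ℂ‖ ^ 2) +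
          Real.log (1 + a₂ * ‖⟪wr, g⟫_ℂ‖ ^ 2 /
            (a₃ * ‖⟪wr, Matrix.toEuclideanLin H wt⟫_ℂ‖ ^ 2 + 1))} =
      Real.log (1 + a₁ * ‖⟪wt, h⟫_ℂ‖ ^ 2) +
        Real.log (1 + a₂ * (‖g‖ ^ 2 -
          a₃ * ‖⟪Matrix.toEuclideanLin H wt, g⟫_ℂ‖ ^ 2 /
            (1 + a₃ * ‖Matrix.toEuclideanLin H wt‖ ^ 2))) :=
  sum_rate_receive_beamformer_reduction_general M hM h g H a₁ a₂ a₃ ha₂ ha₃ wt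
end
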